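/- A map T from the algebra of polyhedral cones PC(V) to a real vector space W is a valuation (i.e., extends to a linear map on the span of indicator functions of cones) if and only if for every nonzero y ∈ V and every cone C, T(C) = T(C ∩ H_y⁺) + T(C ∩ H_y⁻) − T(C ∩ H_y). -/
import Mathlib


open scoped RealInnerProductSpace
open scoped Classical
set_option linter.unusedSectionVars false

noncomputable section

variable {V : Type*} [NormedAddCommGroup V] [InnerProductSpace ℝ V] [FiniteDimensional ℝ V]

/-- A polyhedral cone: a finite intersection of closed halfspaces through the origin. -/
def IsPolyCone (C : Set V) : Prop :=
  ∃ s : Finset V, C = ⋂ y ∈ s, {v : V | 0 ≤ ⟪v, y⟫}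

/-- `F` is a face of the cone `C`: `F = C ∩ H_y` for some `y` (possibly `0`) with `C ⊆ H_y⁺`. -/
def IsFaceOf (F C : Set V) : Prop :=
  ∃ y : V, C ⊆ {v : V | 0 ≤ ⟪v, y⟫} ∧ F = C ∩ {v : V | ⟪v, y⟫ = 0}

/-- Dimension of a set: the dimension of its linear span. -/
def sdim (S : Set V) : ℕ := Module.finrank ℝ (Submodule.span ℝ S)

/-- Dual cone. -/
def dualCone (C : Set V) : Set V := {v : V | ∀ c ∈ C, 0 ≤ ⟪v, c⟫}

/-- Angle cone `A(F, C) = { a • (x - z) : a > 0, x ∈ C, z ∈ relint F }`. -/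
def angleCone (F C : Set V) : Set V :=
  {w : V | ∃ a : ℝ, 0 < a ∧ ∃ x ∈ C, ∃ z ∈ intrinsicInterior ℝ F, w = a • (x - z)}

/-- Real-valued indicator function of a set. -/
def ind (S : Set V) : V → ℝ := S.indicator 1

/-- The `Γ` function: `Γ(C, x, y) = Σ_{F face of C} (-1)^(dim F) [A(F,C)](x) [F*](y)`. -/
def Γ (C : Set V) (x y : V) : ℝ :=
  ∑ᶠ F ∈ {F : Set V | IsFaceOf F C},
    (-1 : ℝ) ^ sdim F * ind (angleCone F C) x * ind (dualCone F) y

/-- `F₀` is the minimal face of `C`. -/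
def IsMinimalFace (F₀ C : Set V) : Prop :=
  IsFaceOf F₀ C ∧ ∀ F : Set V, IsFaceOf F C → F₀ ⊆ F

/-- A polyhedron: a finite intersection of translates of halfspaces. -/
def IsPolyhedron (P : Set V) : Prop :=
  ∃ s : Finset (V × ℝ), P = ⋂ p ∈ s, {v : V | p.2 ≤ ⟪v, p.1⟫}

namespace Stmt9Aux

lemma szero : SignType.zero = 0 := rfl
lemma spos : SignType.pos = 1 := rfl
lemma sneg : SignType.neg = -1 := rfl

def cellR (s : SignType) (y : V) : Set V :=
  match s with
  | .pos => {v | 0 ≤ ⟪v, y⟫}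
  | .zero => {v | ⟪v, y⟫ = 0}
  | .neg => {v | ⟪v, y⟫ ≤ 0}

lemma isPolyCone_inter {C D : Set V} (hC : IsPolyCone C) (hD : IsPolyCone D) :
    IsPolyCone (C ∩ D) := by
  obtain ⟨s, rfl⟩ := hC; obtain ⟨t, rfl⟩ := hD
  refine ⟨s ∪ t, ?_⟩
  ext v
  simp only [Set.mem_inter_iff, Set.mem_iInter, Finset.mem_union]
  constructor
  · rintro ⟨h1, h2⟩ y (hy | hy)
    · exact h1 y hy
    · exact h2 y hy
  · intro h; exact ⟨fun y hy => h y (Or.inl hy), fun y hy => h y (Or.inr hy)⟩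

lemma isPolyCone_halfspace (y : V) : IsPolyCone {v : V | 0 ≤ ⟪v, y⟫} :=
  ⟨{y}, by simp⟩

lemma cellR_neg_eq (y : V) : cellR .neg y = {v : V | 0 ≤ ⟪v, -y⟫} := by
  ext v; simp [cellR, inner_neg_right, neg_nonneg]

lemma cellR_zero_eq (y : V) :
    cellR .zero y = {v : V | 0 ≤ ⟪v, y⟫} ∩ {v : V | 0 ≤ ⟪v, -y⟫} := by
  ext v
  simp only [cellR, Set.mem_setOf_eq, Set.mem_inter_iff, inner_neg_right, neg_nonneg]
  constructor
  · rintro h; exact ⟨h.ge, h.le⟩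
  · rintro ⟨h1, h2⟩; exact le_antisymm h2 h1

lemma isPolyCone_cellR (s : SignType) (y : V) : IsPolyCone (cellR s y) := by
  cases s
  · rw [cellR_zero_eq]; exact isPolyCone_inter (isPolyCone_halfspace y) (isPolyCone_halfspace (-y))
  · rw [cellR_neg_eq]; exact isPolyCone_halfspace (-y)
  · exact isPolyCone_halfspace y

lemma inter_cellR {C : Set V} (hC : IsPolyCone C) (s : SignType) (y : V) :
    IsPolyCone (C ∩ cellR s y) := isPolyCone_inter hC (isPolyCone_cellR s y)

lemma mem_cellR_iff {v : V} {s : SignType} {y : V} :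
    v ∈ cellR s y ↔ (SignType.sign ⟪v, y⟫ = 0 ∨ SignType.sign ⟪v, y⟫ = s) := by
  cases s with
  | zero => simp [cellR, sign_eq_zero_iff]
  | neg =>
    simp only [cellR, Set.mem_setOf_eq]
    constructor
    · intro h
      rcases h.lt_or_eq with h' | h'
      · exact Or.inr (sign_eq_neg_one_iff.mpr h')
      · exact Or.inl (sign_eq_zero_iff.mpr h')
    · rintro (h | h)
      · exact (sign_eq_zero_iff.mp h).le
      · exact (sign_eq_neg_one_iff.mp h).le
  | pos =>
    simp only [cellR, Set.mem_setOf_eq]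
    constructor
    · intro h
      rcases h.lt_or_eq with h' | h'
      · exact Or.inr (sign_eq_one_iff.mpr h')
      · exact Or.inl (sign_eq_zero_iff.mpr h'.symm)
    · rintro (h | h)
      · exact (sign_eq_zero_iff.mp h).ge
      · exact (sign_eq_one_iff.mp h).le

/-- Pointwise halfspace-cut identity for indicator functions. -/
lemma ind_cut (C : Set V) (y : V) :
    ind C = ind (C ∩ cellR 1 y) + ind (C ∩ cellR (-1) y) - ind (C ∩ cellR 0 y) := by
  funext v
  by_cases hv : v ∈ C
  · rcases lt_trichotomy (⟪v, y⟫ : ℝ) 0 with h | h | h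
    · have h1 : v ∉ cellR 1 y := by simp [cellR, not_le.mpr h]
      have h0 : v ∉ cellR 0 y := by simp [cellR, h.ne]
      have hn : v ∈ cellR (-1) y := h.le
      simp [ind, Set.indicator_apply, hv, h1, h0, hn]
    · have h1 : v ∈ cellR 1 y := h.ge
      have h0 : v ∈ cellR 0 y := h
      have hn : v ∈ cellR (-1) y := h.le
      simp [ind, Set.indicator_apply, hv, h1, h0, hn]
    · have h1 : v ∈ cellR 1 y := h.le
      have h0 : v ∉ cellR 0 y := by simp [cellR, h.ne']
      have hn : v ∉ cellR (-1) y := by simp [cellR, not_le.mpr h]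
      simp [ind, Set.indicator_apply, hv, h1, h0, hn]
  · simp [ind, Set.indicator_apply, hv]


section Cells
variable {ι : Type*} [Fintype ι] [DecidableEq ι]

def pcell (yv : ι → V) (s : Finset ι) (δ : ι → SignType) : Set V :=
  ⋂ i ∈ s, cellR (δ i) (yv i)

def fcell (yv : ι → V) (δ : ι → SignType) : Set V := ⋂ i, cellR (δ i) (yv i)

def eS : SignType → ℝ
  | .zero => -1
  | .neg => 1
  | .pos => 1

lemma pcell_univ (yv : ι → V) (δ : ι → SignType) : pcell yv Finset.univ δ = fcell yv δ := by
  simp [pcell, fcell]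

lemma pcell_insert (yv : ι → V) (a : ι) (s : Finset ι) (δ : ι → SignType) :
    pcell yv (insert a s) δ = cellR (δ a) (yv a) ∩ pcell yv s δ := by
  simp [pcell, Set.biInter_insert]

lemma pcell_congr (yv : ι → V) {s : Finset ι} {δ δ' : ι → SignType}
    (h : ∀ i ∈ s, δ i = δ' i) : pcell yv s δ = pcell yv s δ' := by
  unfold pcell
  exact Set.iInter₂_congr fun i hi => by rw [h i hi]

lemma sum_signType {M : Type*} [AddCommMonoid M] (f : SignType → M) :
    ∑ s : SignType, f s = f 0 + f (-1) + f 1 := by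
  have h : (Finset.univ : Finset SignType) = {0, -1, 1} := by decide
  rw [h, Finset.sum_insert (by decide), Finset.sum_insert (by decide), Finset.sum_singleton,
    add_assoc]

variable {W' : Type*} [AddCommGroup W'] [Module ℝ W']

lemma cut_sum (yv : ι → V) (U : Set V → W') (P : Set V → Prop)
    (hcut : ∀ C, P C → ∀ i : ι,
      U C = U (C ∩ cellR 1 (yv i)) + U (C ∩ cellR (-1) (yv i)) - U (C ∩ cellR 0 (yv i)))
    (C : Set V) (hC : P C) (i : ι) :
    U C = ∑ r : SignType, eS r • U (C ∩ cellR r (yv i)) := by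
  rw [sum_signType (fun r => eS r • U (C ∩ cellR r (yv i)))]
  simp only [show eS 0 = -1 from rfl, show eS (-1) = 1 from rfl, show eS 1 = 1 from rfl,
    one_smul]
  rw [hcut C hC i]
  module

lemma P_pcell (yv : ι → V) (P : Set V → Prop)
    (hP : ∀ C s y, P C → P (C ∩ cellR s y)) (s : Finset ι) (δ : ι → SignType)
    (C : Set V) (hC : P C) : P (C ∩ pcell yv s δ) := by
  induction s using Finset.induction_on with
  | empty => simpa [pcell] using hC
  | @insert a s ha ih =>
    have hset : C ∩ pcell yv (insert a s) δ = (C ∩ pcell yv s δ) ∩ cellR (δ a) (yv a) := by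
      rw [pcell_insert]; ext v
      simp only [Set.mem_inter_iff]; tauto
    rw [hset]
    exact hP _ _ _ ih

lemma expansion_aux (yv : ι → V) (U : Set V → W') (P : Set V → Prop)
    (hP : ∀ C s y, P C → P (C ∩ cellR s y))
    (hcut : ∀ C, P C → ∀ i : ι,
      U C = U (C ∩ cellR 1 (yv i)) + U (C ∩ cellR (-1) (yv i)) - U (C ∩ cellR 0 (yv i)))
    (s : Finset ι) (C : Set V) (hC : P C) :
    U C = ∑ δ : ι → SignType,
      ((3⁻¹ : ℝ) ^ (Finset.univ \ s).card * ∏ i ∈ s, eS (δ i)) • U (C ∩ pcell yv s δ) := by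
  induction s using Finset.induction_on with
  | empty =>
    simp only [Finset.prod_empty, mul_one, Finset.sdiff_empty]
    have hc : ∀ δ : ι → SignType, C ∩ pcell yv ∅ δ = C := by
      intro δ; simp [pcell]
    simp only [hc]
    rw [Finset.sum_const, Finset.card_univ, Fintype.card_fun]
    have h3 : Fintype.card SignType = 3 := rfl
    rw [h3, ← Nat.cast_smul_eq_nsmul ℝ, smul_smul]
    have : ((3 ^ Fintype.card ι : ℕ) : ℝ) * (3⁻¹ : ℝ) ^ (Finset.univ : Finset ι).card = 1 := by
      rw [Finset.card_univ]
      push_cast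
      rw [← mul_pow, mul_inv_cancel₀ (by norm_num : (3:ℝ) ≠ 0), one_pow]
    rw [this, one_smul]
  | @insert a s ha ih =>
    rw [ih]
    have hset : ∀ (δ : ι → SignType) (r : SignType),
        C ∩ pcell yv s δ ∩ cellR r (yv a)
          = C ∩ pcell yv (insert a s) (Function.update δ a r) := by
      intro δ r
      rw [pcell_insert, pcell_congr yv (δ := Function.update δ a r) (δ' := δ)
        (fun i hi => Function.update_of_ne (ne_of_mem_of_not_mem hi ha) r δ),
        Function.update_self]
      ext v; simp only [Set.mem_inter_iff]; tauto
    have step : ∀ δ : ι → SignType,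
        ((3⁻¹ : ℝ) ^ (Finset.univ \ s).card * ∏ i ∈ s, eS (δ i)) • U (C ∩ pcell yv s δ)
        = ∑ r : SignType, (((3⁻¹ : ℝ) ^ (Finset.univ \ s).card * ∏ i ∈ s, eS (δ i)) * eS r) •
            U (C ∩ pcell yv (insert a s) (Function.update δ a r)) := by
      intro δ
      have hPC : P (C ∩ pcell yv s δ) := P_pcell yv P hP s δ C hC
      rw [cut_sum yv U P hcut (C ∩ pcell yv s δ) hPC a, Finset.smul_sum]
      exact Finset.sum_congr rfl fun r _ => by rw [smul_smul, hset δ r]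
    simp only [step]
    have hcard : (Finset.univ \ s).card = (Finset.univ \ insert a s).card + 1 := by
      rw [Finset.sdiff_insert]
      exact (Finset.card_erase_add_one (Finset.mem_sdiff.mpr ⟨Finset.mem_univ a, ha⟩)).symm
    calc
      ∑ δ : ι → SignType, ∑ r : SignType,
          (((3⁻¹ : ℝ) ^ (Finset.univ \ s).card * ∏ i ∈ s, eS (δ i)) * eS r) •
            U (C ∩ pcell yv (insert a s) (Function.update δ a r))
        = ∑ p : (ι → SignType) × SignType,
            (((3⁻¹ : ℝ) ^ (Finset.univ \ s).card * ∏ i ∈ s, eS (p.1 i)) * eS p.2) •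
              U (C ∩ pcell yv (insert a s) (Function.update p.1 a p.2)) :=
          (Fintype.sum_prod_type' (f := fun δ r =>
            (((3⁻¹ : ℝ) ^ (Finset.univ \ s).card * ∏ i ∈ s, eS (δ i)) * eS r) •
              U (C ∩ pcell yv (insert a s) (Function.update δ a r)))).symm
      _ = ∑ q : (ι → SignType) × SignType,
            (((3⁻¹ : ℝ) ^ (Finset.univ \ s).card * ∏ i ∈ s, eS (q.1 i)) * eS (q.1 a)) •
              U (C ∩ pcell yv (insert a s) q.1) := by
          refine Fintype.sum_equiv
            ⟨fun p => (Function.update p.1 a p.2, p.1 a),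
             fun q => (Function.update q.1 a q.2, q.1 a), ?_, ?_⟩ _ _ ?_
          · rintro ⟨δ, r⟩
            simp [Function.update_idem, Function.update_self, Function.update_eq_self]
          · rintro ⟨δ, r⟩
            simp [Function.update_idem, Function.update_self, Function.update_eq_self]
          · rintro ⟨δ, r⟩
            have h1 : ∏ i ∈ s, eS (Function.update δ a r i) = ∏ i ∈ s, eS (δ i) :=
              Finset.prod_congr rfl fun i hi => by
                rw [Function.update_of_ne (ne_of_mem_of_not_mem hi ha)]
            simp only [Equiv.coe_fn_mk, h1, Function.update_self]
      _ = ∑ δ : ι → SignType, ∑ _r : SignType,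
            (((3⁻¹ : ℝ) ^ (Finset.univ \ s).card * ∏ i ∈ s, eS (δ i)) * eS (δ a)) •
              U (C ∩ pcell yv (insert a s) δ) := Fintype.sum_prod_type' (f := fun δ _r =>
            (((3⁻¹ : ℝ) ^ (Finset.univ \ s).card * ∏ i ∈ s, eS (δ i)) * eS (δ a)) •
              U (C ∩ pcell yv (insert a s) δ))
      _ = ∑ δ : ι → SignType,
            ((3⁻¹ : ℝ) ^ (Finset.univ \ insert a s).card * ∏ i ∈ insert a s, eS (δ i)) •
              U (C ∩ pcell yv (insert a s) δ) := by
          refine Finset.sum_congr rfl fun δ _ => ?_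
          rw [Finset.sum_const, Finset.card_univ]
          have h3 : Fintype.card SignType = 3 := rfl
          rw [h3, ← Nat.cast_smul_eq_nsmul ℝ, smul_smul]
          congr 1
          rw [Finset.prod_insert ha, hcard, pow_succ]
          push_cast
          ring
-- new material
def sgn (yv : ι → V) (v : V) : ι → SignType := fun i => SignType.sign ⟪v, yv i⟫

def Realz (yv : ι → V) (σ : ι → SignType) : Prop := ∃ v : V, sgn yv v = σ

def sle (σ τ : ι → SignType) : Prop := ∀ i, σ i = 0 ∨ σ i = τ i

lemma sle_refl (σ : ι → SignType) : sle σ σ := fun i => Or.inr rfl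

lemma sle_trans {σ τ ρ : ι → SignType} (h1 : sle σ τ) (h2 : sle τ ρ) : sle σ ρ := by
  intro i
  rcases h1 i with h | h
  · exact Or.inl h
  · rcases h2 i with h' | h'
    · exact Or.inl (h.trans h')
    · exact Or.inr (h.trans h')

lemma mem_fcell_iff {yv : ι → V} {v : V} {δ : ι → SignType} :
    v ∈ fcell yv δ ↔ sle (sgn yv v) δ := by
  simp only [fcell, Set.mem_iInter, mem_cellR_iff, sle, sgn]

lemma sle_card_lt {σ τ : ι → SignType} (hs : sle τ σ) (hne : τ ≠ σ) :
    (Finset.univ.filter fun i => τ i ≠ 0).card < (Finset.univ.filter fun i => σ i ≠ 0).card := by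
  apply Finset.card_lt_card
  have hsub : (Finset.univ.filter fun i => τ i ≠ 0) ⊆ (Finset.univ.filter fun i => σ i ≠ 0) := by
    intro i hi
    rw [Finset.mem_filter] at hi ⊢
    refine ⟨Finset.mem_univ i, ?_⟩
    rcases hs i with h | h
    · exact absurd h hi.2
    · rw [← h]; exact hi.2
  rw [Finset.ssubset_iff_of_subset hsub]
  obtain ⟨i, hi⟩ := Function.ne_iff.mp hne
  have hτ : τ i = 0 := by
    rcases hs i with h | h
    · exact h
    · exact absurd h hi
  have hσ : σ i ≠ 0 := by
    intro h
    exact hi (hτ.trans h.symm)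
  exact ⟨i, Finset.mem_filter.mpr ⟨Finset.mem_univ i, hσ⟩, by simp [hτ]⟩

variable {W' : Type*} [AddCommGroup W'] [Module ℝ W']

def tfun (U : Set V → W') (yv : ι → V) (σ : ι → SignType) : W' :=
  if Realz yv σ then
    U (fcell yv σ) -
      ∑ τ ∈ (Finset.univ.filter fun τ => Realz yv τ ∧ sle τ σ ∧ τ ≠ σ).attach,
        tfun U yv τ.1
  else 0
termination_by (Finset.univ.filter fun i => σ i ≠ 0).card
decreasing_by
  have h := τ.2
  rw [Finset.mem_filter] at h
  exact sle_card_lt h.2.2.1 h.2.2.2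

lemma tfun_not_realz (U : Set V → W') (yv : ι → V) {σ : ι → SignType} (h : ¬ Realz yv σ) :
    tfun U yv σ = 0 := by
  rw [tfun, if_neg h]

lemma tfun_inv_realz (U : Set V → W') (yv : ι → V) {σ : ι → SignType} (hσ : Realz yv σ) :
    ∑ τ ∈ (Finset.univ.filter fun τ => Realz yv τ ∧ sle τ σ), tfun U yv τ
      = U (fcell yv σ) := by
  have hins : (Finset.univ.filter fun τ => Realz yv τ ∧ sle τ σ)
      = insert σ (Finset.univ.filter fun τ => Realz yv τ ∧ sle τ σ ∧ τ ≠ σ) := by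
    ext τ
    simp only [Finset.mem_filter, Finset.mem_insert, Finset.mem_univ, true_and]
    constructor
    · rintro ⟨h1, h2⟩
      by_cases h : τ = σ
      · exact Or.inl h
      · exact Or.inr ⟨h1, h2, h⟩
    · rintro (rfl | ⟨h1, h2, _⟩)
      · exact ⟨hσ, sle_refl _⟩
      · exact ⟨h1, h2⟩
  rw [hins, Finset.sum_insert (by simp)]
  have hunfold : tfun U yv σ = U (fcell yv σ) -
      ∑ τ ∈ (Finset.univ.filter fun τ => Realz yv τ ∧ sle τ σ ∧ τ ≠ σ).attach,
        tfun U yv τ.1 := by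
    rw [tfun, if_pos hσ]
  rw [hunfold, Finset.sum_attach]
  abel

def pick (yv : ι → V) (σ : ι → SignType) : V :=
  if h : Realz yv σ then h.choose else 0

lemma sgn_pick {yv : ι → V} {σ : ι → SignType} (h : Realz yv σ) : sgn yv (pick yv σ) = σ := by
  rw [pick, dif_pos h]
  exact h.choose_spec

/-- Every (possibly unrealizable) sign vector `δ` has a maximal realizable minorant. -/
lemma exists_star (yv : ι → V) (δ : ι → SignType) :
    ∃ σs : ι → SignType, Realz yv σs ∧ sle σs δ ∧
      ∀ τ, Realz yv τ → sle τ δ → sle τ σs := by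
  classical
  set S := Finset.univ.filter (fun σ : ι → SignType => Realz yv σ ∧ sle σ δ) with hS
  set v0 : V := ∑ σ ∈ S, pick yv σ with hv0
  refine ⟨sgn yv v0, ⟨v0, rfl⟩, ?_, ?_⟩
  all_goals
    have hterm : ∀ i, ⟪v0, yv i⟫ = ∑ σ ∈ S, ⟪pick yv σ, yv i⟫ := fun i => sum_inner S _ _
  · -- sle (sgn yv v0) δ
    intro i
    have hsig : ∀ σ ∈ S, SignType.sign (⟪pick yv σ, yv i⟫ : ℝ) = σ i := by
      intro σ hσ
      rw [hS, Finset.mem_filter] at hσ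
      have := sgn_pick hσ.2.1
      exact congrFun this i
    cases hδ : δ i with
    | zero =>
      rw [szero] at hδ
      left
      have : ∀ σ ∈ S, (⟪pick yv σ, yv i⟫ : ℝ) = 0 := by
        intro σ hσ
        have h2 : sle σ δ := (Finset.mem_filter.mp (hS ▸ hσ)).2.2
        have : σ i = 0 := by
          rcases h2 i with h | h
          · exact h
          · rw [h, hδ]
        rw [← hsig σ hσ, sign_eq_zero_iff] at this
        exact this
      simp only [sgn]
      rw [hterm i, Finset.sum_eq_zero this, sign_zero]
    | pos =>
      rw [spos] at hδ
      have hnn : ∀ σ ∈ S, (0:ℝ) ≤ ⟪pick yv σ, yv i⟫ := by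
        intro σ hσ
        have h2 : sle σ δ := (Finset.mem_filter.mp (hS ▸ hσ)).2.2
        rcases h2 i with h | h
        · rw [← hsig σ hσ, sign_eq_zero_iff] at h; exact h.ge
        · rw [hδ] at h
          rw [← hsig σ hσ, sign_eq_one_iff] at h
          exact h.le
      have hsum : (0:ℝ) ≤ ⟪v0, yv i⟫ := by
        rw [hterm i]; exact Finset.sum_nonneg hnn
      rcases hsum.lt_or_eq with h | h
      · right; simp only [sgn]; rw [sign_eq_one_iff.mpr h]; exact spos.symm
      · left; simp only [sgn]; rw [← h, sign_zero]
    | neg =>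
      rw [sneg] at hδ
      have hnp : ∀ σ ∈ S, (⟪pick yv σ, yv i⟫:ℝ) ≤ 0 := by
        intro σ hσ
        have h2 : sle σ δ := (Finset.mem_filter.mp (hS ▸ hσ)).2.2
        rcases h2 i with h | h
        · rw [← hsig σ hσ, sign_eq_zero_iff] at h; exact h.le
        · rw [hδ] at h
          rw [← hsig σ hσ, sign_eq_neg_one_iff] at h
          exact h.le
      have hsum : (⟪v0, yv i⟫:ℝ) ≤ 0 := by
        rw [hterm i]; exact Finset.sum_nonpos hnp
      rcases hsum.lt_or_eq with h | h
      · right; simp only [sgn]; rw [sign_eq_neg_one_iff.mpr h]; exact sneg.symm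
      · left; simp only [sgn]; rw [h, sign_zero]
  · -- maximality
    intro τ hτr hτδ i
    by_cases h0 : τ i = 0
    · exact Or.inl h0
    right
    have hτS : τ ∈ S := by
      rw [hS, Finset.mem_filter]; exact ⟨Finset.mem_univ τ, hτr, hτδ⟩
    have hδi : τ i = δ i := by
      rcases hτδ i with h | h
      · exact absurd h h0
      · exact h
    have hsig : ∀ σ ∈ S, SignType.sign (⟪pick yv σ, yv i⟫ : ℝ) = σ i := by
      intro σ hσ
      have := sgn_pick (Finset.mem_filter.mp (hS ▸ hσ)).2.1
      exact congrFun this i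
    have hsle : ∀ σ ∈ S, sle σ δ := fun σ hσ => (Finset.mem_filter.mp (hS ▸ hσ)).2.2
    cases hδ : δ i with
    | zero =>
      rw [szero] at hδ
      exact absurd (hδi.trans hδ) h0
    | pos =>
      rw [spos] at hδ
      have hnn : ∀ σ ∈ S, (0:ℝ) ≤ ⟪pick yv σ, yv i⟫ := by
        intro σ hσ
        rcases hsle σ hσ i with h | h
        · rw [← hsig σ hσ, sign_eq_zero_iff] at h; exact h.ge
        · rw [hδ] at h; rw [← hsig σ hσ, sign_eq_one_iff] at h; exact h.le
      have hpos : (0:ℝ) < ⟪pick yv τ, yv i⟫ := by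
        have := hsig τ hτS
        rw [hδi, hδ] at this
        exact sign_eq_one_iff.mp this
      have : (0:ℝ) < ⟪v0, yv i⟫ := by
        rw [hterm i]
        exact Finset.sum_pos' hnn ⟨τ, hτS, hpos⟩
      simp only [sgn]
      rw [sign_eq_one_iff.mpr this, hδi, hδ]
    | neg =>
      rw [sneg] at hδ
      have hnp : ∀ σ ∈ S, (⟪pick yv σ, yv i⟫:ℝ) ≤ 0 := by
        intro σ hσ
        rcases hsle σ hσ i with h | h
        · rw [← hsig σ hσ, sign_eq_zero_iff] at h; exact h.le
        · rw [hδ] at h; rw [← hsig σ hσ, sign_eq_neg_one_iff] at h; exact h.le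
      have hneg : (⟪pick yv τ, yv i⟫:ℝ) < 0 := by
        have := hsig τ hτS
        rw [hδi, hδ] at this
        exact sign_eq_neg_one_iff.mp this
      have : (⟪v0, yv i⟫:ℝ) < 0 := by
        rw [hterm i]
        have := Finset.sum_pos' (f := fun σ => -(⟪pick yv σ, yv i⟫:ℝ)) (s := S)
          (fun σ hσ => by simpa using hnp σ hσ) ⟨τ, hτS, by simpa using hneg⟩
        simpa using this
      simp only [sgn]
      rw [sign_eq_neg_one_iff.mpr this, hδi, hδ]

lemma tfun_inv (U : Set V → W') (yv : ι → V) (δ : ι → SignType) :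
    ∑ τ ∈ (Finset.univ.filter fun τ => Realz yv τ ∧ sle τ δ), tfun U yv τ
      = U (fcell yv δ) := by
  obtain ⟨σs, hreal, hle, hmax⟩ := exists_star yv δ
  have hfil : (Finset.univ.filter fun τ => Realz yv τ ∧ sle τ δ)
      = (Finset.univ.filter fun τ => Realz yv τ ∧ sle τ σs) := by
    ext τ
    simp only [Finset.mem_filter, Finset.mem_univ, true_and]
    constructor
    · rintro ⟨h1, h2⟩; exact ⟨h1, hmax τ h1 h2⟩
    · rintro ⟨h1, h2⟩; exact ⟨h1, sle_trans h2 hle⟩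
  have hcell : fcell yv δ = fcell yv σs := by
    ext v
    rw [mem_fcell_iff, mem_fcell_iff]
    constructor
    · intro h; exact hmax _ ⟨v, rfl⟩ h
    · intro h; exact sle_trans h hle
  rw [hfil, hcell, tfun_inv_realz U yv hreal]

/-- The key "cells" lemma: any vanishing combination of indicators of closed cells
forces the corresponding combination of `U`-values to vanish, for ANY `U`. -/
lemma cells_lemma (yv : ι → V) (U : Set V → W') (g : (ι → SignType) → ℝ)
    (H : ∑ δ : ι → SignType, g δ • ind (fcell yv δ) = 0) :
    ∑ δ : ι → SignType, g δ • U (fcell yv δ) = 0 := by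
  have step1 : ∑ δ : ι → SignType, g δ • U (fcell yv δ)
      = ∑ δ : ι → SignType, ∑ τ : ι → SignType,
          (if Realz yv τ ∧ sle τ δ then g δ • tfun U yv τ else 0) := by
    refine Finset.sum_congr rfl fun δ _ => ?_
    rw [← tfun_inv U yv δ, Finset.smul_sum, Finset.sum_filter]
  rw [step1, Finset.sum_comm]
  refine Finset.sum_eq_zero fun τ _ => ?_
  by_cases hτ : Realz yv τ
  · have hev : ∑ δ : ι → SignType, (if sle τ δ then g δ else 0) = 0 := by
      have hH := congrFun H (pick yv τ)
      rw [Finset.sum_apply, Pi.zero_apply] at hH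
      have h2 : ∑ δ : ι → SignType, (if sle τ δ then g δ else 0)
          = ∑ δ : ι → SignType, (g δ • ind (fcell yv δ)) (pick yv τ) := by
        refine Finset.sum_congr rfl fun δ _ => ?_
        rw [Pi.smul_apply, smul_eq_mul, ind, Set.indicator_apply]
        have hmem : pick yv τ ∈ fcell yv δ ↔ sle τ δ := by
          rw [mem_fcell_iff, sgn_pick hτ]
        by_cases hs : sle τ δ
        · rw [if_pos hs, if_pos (hmem.mpr hs), Pi.one_apply, mul_one]
        · rw [if_neg hs, if_neg (fun hh => hs (hmem.mp hh)), mul_zero]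
      rw [h2, hH]
    calc ∑ δ : ι → SignType, (if Realz yv τ ∧ sle τ δ then g δ • tfun U yv τ else 0)
        = ∑ δ : ι → SignType, (if sle τ δ then g δ else 0) • tfun U yv τ := by
          refine Finset.sum_congr rfl fun δ _ => ?_
          by_cases hs : sle τ δ
          · rw [if_pos (⟨hτ, hs⟩ : Realz yv τ ∧ sle τ δ), if_pos hs]
          · rw [if_neg (fun hh : Realz yv τ ∧ sle τ δ => hs hh.2), if_neg hs, zero_smul]
      _ = (∑ δ : ι → SignType, (if sle τ δ then g δ else 0)) • tfun U yv τ := by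
          rw [Finset.sum_smul]
      _ = 0 := by rw [hev, zero_smul]
  · refine Finset.sum_eq_zero fun δ _ => ?_
    have hn : ¬(Realz yv τ ∧ sle τ δ) := fun h => hτ h.1
    rw [if_neg hn]

-- cone/cell reduction
def coneOf (yv : ι → V) (K : Finset ι) : Set V := ⋂ i ∈ K, {v : V | 0 ≤ ⟪v, yv i⟫}

lemma isPolyCone_coneOf (yv : ι → V) (K : Finset ι) : IsPolyCone (coneOf yv K) := by
  refine ⟨K.image yv, ?_⟩
  ext v
  simp only [coneOf, Set.mem_iInter, Finset.mem_image]
  constructor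
  · rintro h y ⟨i, hi, rfl⟩
    exact h i hi
  · intro h i hi
    exact h (yv i) ⟨i, hi, rfl⟩

def mmap (K : Finset ι) (δ : ι → SignType) : ι → SignType :=
  fun i => if i ∈ K ∧ δ i = -1 then 0 else δ i

lemma cellR_one_def (y : V) : cellR 1 y = {v : V | 0 ≤ ⟪v, y⟫} := rfl
lemma cellR_zero_def (y : V) : cellR 0 y = {v : V | ⟪v, y⟫ = 0} := rfl
lemma cellR_negone_def (y : V) : cellR (-1) y = {v : V | ⟪v, y⟫ ≤ 0} := rfl

lemma cone_inter_fcell (yv : ι → V) (K : Finset ι) (δ : ι → SignType) :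
    coneOf yv K ∩ fcell yv δ = fcell yv (mmap K δ) := by
  ext v
  simp only [Set.mem_inter_iff, coneOf, Set.mem_iInter, fcell]
  constructor
  · rintro ⟨hK, hf⟩ i
    by_cases h : i ∈ K ∧ δ i = -1
    · have hmi : mmap K δ i = 0 := by simp only [mmap, if_pos h]
      rw [hmi]
      have h1 : v ∈ cellR (-1) (yv i) := h.2 ▸ hf i
      show (⟪v, yv i⟫ : ℝ) = 0
      exact le_antisymm h1 (hK i h.1)
    · have hmi : mmap K δ i = δ i := by simp only [mmap, if_neg h]
      rw [hmi]
      exact hf i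
  · intro h
    refine ⟨fun i hi => ?_, fun i => ?_⟩
    · by_cases hn : δ i = -1
      · have hmi : mmap K δ i = 0 := by
          simp only [mmap, if_pos (⟨hi, hn⟩ : i ∈ K ∧ δ i = -1)]
        have hthis := h i
        rw [hmi] at hthis
        exact (hthis : (⟪v, yv i⟫ : ℝ) = 0).ge
      · have hmi : mmap K δ i = δ i := by
          simp only [mmap, if_neg (fun hh : i ∈ K ∧ δ i = -1 => hn hh.2)]
        have hthis := h i
        rw [hmi] at hthis
        cases hδi : δ i with
        | zero =>
          rw [szero] at hδi; rw [hδi] at hthis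
          exact (hthis : (⟪v, yv i⟫ : ℝ) = 0).ge
        | pos =>
          rw [spos] at hδi; rw [hδi] at hthis
          exact hthis
        | neg =>
          rw [sneg] at hδi; exact absurd hδi hn
    · by_cases hc : i ∈ K ∧ δ i = -1
      · have hmi : mmap K δ i = 0 := by simp only [mmap, if_pos hc]
        have hthis := h i
        rw [hmi] at hthis
        rw [hc.2]
        exact le_of_eq (hthis : (⟪v, yv i⟫ : ℝ) = 0)
      · have hmi : mmap K δ i = δ i := by simp only [mmap, if_neg hc]
        have hthis := h i
        rw [hmi] at hthis
        exact hthis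

def gcoef {J : Type*} [Fintype J] (a : J → ℝ) (K : J → Finset ι) (δ : ι → SignType) : ℝ :=
  ∑ j, ∑ ε : ι → SignType,
    (if mmap (K j) ε = δ then
      a j * ((3⁻¹ : ℝ) ^ ((Finset.univ : Finset ι) \ (Finset.univ : Finset ι)).card *
        ∏ i ∈ (Finset.univ : Finset ι), eS (ε i)) else 0)

lemma rearr (yv : ι → V) (X : Set V → W') (P : Set V → Prop)
    (hP : ∀ C s y, P C → P (C ∩ cellR s y))
    (hcut : ∀ C, P C → ∀ i : ι,
      X C = X (C ∩ cellR 1 (yv i)) + X (C ∩ cellR (-1) (yv i)) - X (C ∩ cellR 0 (yv i)))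
    {J : Type*} [Fintype J] (a : J → ℝ) (K : J → Finset ι)
    (hPc : ∀ j, P (coneOf yv (K j))) :
    ∑ j, a j • X (coneOf yv (K j)) = ∑ δ : ι → SignType, gcoef a K δ • X (fcell yv δ) := by
  have step1 : ∑ j, a j • X (coneOf yv (K j))
      = ∑ j, ∑ ε : ι → SignType,
          (a j * ((3⁻¹ : ℝ) ^ ((Finset.univ : Finset ι) \ (Finset.univ : Finset ι)).card *
            ∏ i ∈ (Finset.univ : Finset ι), eS (ε i))) • X (fcell yv (mmap (K j) ε)) := by
    refine Finset.sum_congr rfl fun j _ => ?_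
    rw [expansion_aux yv X P hP hcut Finset.univ (coneOf yv (K j)) (hPc j), Finset.smul_sum]
    refine Finset.sum_congr rfl fun ε _ => ?_
    rw [smul_smul, pcell_univ, cone_inter_fcell]
  rw [step1]
  have step2 : ∀ (j : J) (ε : ι → SignType),
      (a j * ((3⁻¹ : ℝ) ^ ((Finset.univ : Finset ι) \ (Finset.univ : Finset ι)).card *
        ∏ i ∈ (Finset.univ : Finset ι), eS (ε i))) • X (fcell yv (mmap (K j) ε))
      = ∑ δ : ι → SignType,
          (if mmap (K j) ε = δ then
            (a j * ((3⁻¹ : ℝ) ^ ((Finset.univ : Finset ι) \ (Finset.univ : Finset ι)).card *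
              ∏ i ∈ (Finset.univ : Finset ι), eS (ε i))) • X (fcell yv δ) else 0) := by
    intro j ε
    rw [Finset.sum_ite_eq, if_pos (Finset.mem_univ _)]
  simp only [step2]
  have h1 : (∑ j : J, ∑ ε : ι → SignType, ∑ δ : ι → SignType,
        (if mmap (K j) ε = δ then
          (a j * ((3⁻¹ : ℝ) ^ ((Finset.univ : Finset ι) \ (Finset.univ : Finset ι)).card *
            ∏ i ∈ (Finset.univ : Finset ι), eS (ε i))) • X (fcell yv δ) else 0))
      = ∑ j : J, ∑ δ : ι → SignType, ∑ ε : ι → SignType,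
        (if mmap (K j) ε = δ then
          (a j * ((3⁻¹ : ℝ) ^ ((Finset.univ : Finset ι) \ (Finset.univ : Finset ι)).card *
            ∏ i ∈ (Finset.univ : Finset ι), eS (ε i))) • X (fcell yv δ) else 0) :=
    Finset.sum_congr rfl fun j _ => Finset.sum_comm
  rw [h1, Finset.sum_comm]
  refine Finset.sum_congr rfl fun δ _ => ?_
  rw [gcoef, Finset.sum_smul]
  refine Finset.sum_congr rfl fun j _ => ?_
  rw [Finset.sum_smul]
  refine Finset.sum_congr rfl fun ε _ => ?_
  rw [ite_smul, zero_smul]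

lemma core (yv : ι → V) (hyv : ∀ i, yv i ≠ 0) (T : Set V → W')
    (hT : ∀ y : V, y ≠ 0 → ∀ C : Set V, IsPolyCone C →
      T C = T (C ∩ {v : V | 0 ≤ ⟪v, y⟫}) + T (C ∩ {v : V | ⟪v, y⟫ ≤ 0})
              - T (C ∩ {v : V | ⟪v, y⟫ = 0}))
    {J : Type*} [Fintype J] (a : J → ℝ) (K : J → Finset ι)
    (H : ∑ j, a j • ind (coneOf yv (K j)) = (0 : V → ℝ)) :
    ∑ j, a j • T (coneOf yv (K j)) = 0 := by
  have hcutT : ∀ C, IsPolyCone C → ∀ i : ι,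
      T C = T (C ∩ cellR 1 (yv i)) + T (C ∩ cellR (-1) (yv i)) - T (C ∩ cellR 0 (yv i)) :=
    fun C hC i => hT (yv i) (hyv i) C hC
  have hcutI : ∀ (C : Set V), True → ∀ i : ι,
      ind C = ind (C ∩ cellR 1 (yv i)) + ind (C ∩ cellR (-1) (yv i))
        - ind (C ∩ cellR 0 (yv i)) :=
    fun C _ i => ind_cut C (yv i)
  rw [rearr yv T IsPolyCone (fun C s y hC => inter_cellR hC s y) hcutT a K
    (fun j => isPolyCone_coneOf yv (K j))]
  rw [rearr yv ind (fun _ => True) (fun _ _ _ _ => trivial) hcutI a K (fun _ => trivial)] at H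
  exact cells_lemma yv T (gcoef a K) H

end Cells
end Stmt9Aux

namespace Stmt9Aux

lemma polyCone_rep {C : Set V} (hC : IsPolyCone C) :
    ∃ s : Finset V, (0 : V) ∉ s ∧ C = ⋂ y ∈ s, {v : V | 0 ≤ ⟪v, y⟫} := by
  obtain ⟨s, rfl⟩ := hC
  refine ⟨s.erase 0, Finset.notMem_erase _ _, ?_⟩
  ext v
  simp only [Set.mem_iInter, Finset.mem_erase]
  constructor
  · intro h y ⟨_, hy⟩
    exact h y hy
  · intro h y hy
    by_cases h0 : y = 0
    · subst h0
      simp only [Set.mem_setOf_eq, inner_zero_right, le_refl]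
    · exact h y ⟨h0, hy⟩

end Stmt9Aux

open Stmt9Aux in
theorem stmt9 {W : Type*} [AddCommGroup W] [Module ℝ W] (T : Set V → W) :
    (∃ L : (Submodule.span ℝ {f : V → ℝ | ∃ C : Set V, IsPolyCone C ∧ f = ind C}) →ₗ[ℝ] W,
        ∀ (C : Set V) (hC : IsPolyCone C),
          L ⟨ind C, Submodule.subset_span ⟨C, hC, rfl⟩⟩ = T C) ↔
    (∀ y : V, y ≠ 0 → ∀ C : Set V, IsPolyCone C →
        T C = T (C ∩ {v : V | 0 ≤ ⟪v, y⟫}) + T (C ∩ {v : V | ⟪v, y⟫ ≤ 0})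
                - T (C ∩ {v : V | ⟪v, y⟫ = 0})) := by
  constructor
  · rintro ⟨L, hL⟩ y hy C hC
    have h1 : IsPolyCone (C ∩ {v : V | 0 ≤ ⟪v, y⟫}) :=
      isPolyCone_inter hC (isPolyCone_halfspace y)
    have h2 : IsPolyCone (C ∩ {v : V | ⟪v, y⟫ ≤ 0}) := by
      have := inter_cellR hC (-1) y
      rwa [cellR_negone_def] at this
    have h3 : IsPolyCone (C ∩ {v : V | ⟪v, y⟫ = 0}) := by
      have := inter_cellR hC 0 y
      rwa [cellR_zero_def] at this
    have hind : ind C = ind (C ∩ {v : V | 0 ≤ ⟪v, y⟫}) + ind (C ∩ {v : V | ⟪v, y⟫ ≤ 0})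
        - ind (C ∩ {v : V | ⟪v, y⟫ = 0}) := ind_cut C y
    have hsub : (⟨ind C, Submodule.subset_span ⟨C, hC, rfl⟩⟩ :
          Submodule.span ℝ {f : V → ℝ | ∃ C : Set V, IsPolyCone C ∧ f = ind C})
        = ⟨ind (C ∩ {v : V | 0 ≤ ⟪v, y⟫}), Submodule.subset_span ⟨_, h1, rfl⟩⟩
          + ⟨ind (C ∩ {v : V | ⟪v, y⟫ ≤ 0}), Submodule.subset_span ⟨_, h2, rfl⟩⟩
          - ⟨ind (C ∩ {v : V | ⟪v, y⟫ = 0}), Submodule.subset_span ⟨_, h3, rfl⟩⟩ := by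
      apply Subtype.ext
      simpa using hind
    rw [← hL C hC, hsub, map_sub, map_add, hL _ h1, hL _ h2, hL _ h3]
  · intro hT
    set sSet : Set (V → ℝ) := {f : V → ℝ | ∃ C : Set V, IsPolyCone C ∧ f = ind C} with hsSet
    let κ := {C : Set V // IsPolyCone C}
    let Ψ : (κ →₀ ℝ) →ₗ[ℝ] (V → ℝ) := Finsupp.linearCombination ℝ (fun C : κ => ind C.1)
    let Φ : (κ →₀ ℝ) →ₗ[ℝ] W := Finsupp.linearCombination ℝ (fun C : κ => T C.1)
    have hrange : Submodule.span ℝ sSet = LinearMap.range Ψ := by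
      rw [Finsupp.range_linearCombination]
      congr 1
      ext f
      constructor
      · rintro ⟨C, hC, rfl⟩
        exact ⟨⟨C, hC⟩, rfl⟩
      · rintro ⟨⟨C, hC⟩, rfl⟩
        exact ⟨C, hC, rfl⟩
    have hker : LinearMap.ker Ψ ≤ LinearMap.ker Φ := by
      intro f hf
      rw [LinearMap.mem_ker] at hf ⊢
      -- set up the index types
      have hrep : ∀ C : κ, ∃ s : Finset V, (0 : V) ∉ s ∧
          C.1 = ⋂ y ∈ s, {v : V | 0 ≤ ⟪v, y⟫} := fun C => polyCone_rep C.2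
      choose sC hsC0 hsCeq using hrep
      let J := {C : κ // C ∈ f.support}
      let ι := Σ j : J, {y : V // y ∈ sC j.1}
      let yv : ι → V := fun k => k.2.1
      have hyv : ∀ k : ι, yv k ≠ 0 := by
        rintro ⟨j, y, hy⟩ h
        exact hsC0 j.1 (h ▸ hy)
      let K : J → Finset ι := fun j => Finset.univ.filter (fun k : ι => (k.2 : V) ∈ sC j.1)
      have hcone : ∀ j : J, coneOf yv (K j) = j.1.1 := by
        intro j
        rw [hsCeq j.1]
        ext v
        simp only [coneOf, Set.mem_iInter, K, Finset.mem_filter, Finset.mem_univ, true_and]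
        constructor
        · intro h y hy
          exact h ⟨j, ⟨y, hy⟩⟩ hy
        · rintro h ⟨j', y⟩ hk
          exact h (y : V) hk
      have hsum_supp : ∀ (g : κ → (V → ℝ)), (∑ j : J, f j.1 • g j.1)
          = ∑ C ∈ f.support, f C • g C :=
        fun g => Finset.sum_coe_sort f.support (fun C => f C • g C)
      have hsum_suppW : ∀ (g : κ → W), (∑ j : J, f j.1 • g j.1)
          = ∑ C ∈ f.support, f C • g C :=
        fun g => Finset.sum_coe_sort f.support (fun C => f C • g C)
      have hH : ∑ j : J, f j.1 • ind (coneOf yv (K j)) = (0 : V → ℝ) := by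
        have e1 : ∑ j : J, f j.1 • ind (coneOf yv (K j))
            = ∑ j : J, f j.1 • ind j.1.1 := by
          refine Finset.sum_congr rfl fun j _ => ?_
          rw [hcone j]
        have hΨf : (Ψ f : V → ℝ) = ∑ C ∈ f.support, f C • ind C.1 := by
          rw [show Ψ f = Finsupp.linearCombination ℝ (fun C : κ => ind C.1) f from rfl,
            Finsupp.linearCombination_apply]
          rfl
        rw [e1, hsum_supp (fun C => ind C.1), ← hΨf]
        exact hf
      have hcore := core yv hyv T hT (fun j : J => f j.1) K hH
      have e2 : ∑ j : J, f j.1 • T (coneOf yv (K j)) = ∑ j : J, f j.1 • T j.1.1 := by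
        refine Finset.sum_congr rfl fun j _ => ?_
        rw [hcone j]
      rw [e2, hsum_suppW (fun C => T C.1)] at hcore
      rw [show Φ f = ∑ C ∈ f.support, f C • T C.1 from by
        rw [show Φ f = Finsupp.linearCombination ℝ (fun C : κ => T C.1) f from rfl,
          Finsupp.linearCombination_apply]
        rfl]
      exact hcore
    -- build L
    refine ⟨(Submodule.liftQ (LinearMap.ker Ψ) Φ hker).comp
      (((LinearMap.quotKerEquivRange Ψ).symm.toLinearMap).comp
        (LinearEquiv.ofEq _ _ hrange).toLinearMap), ?_⟩
    intro C hC
    have hmem : ind C ∈ LinearMap.range Ψ := by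
      rw [← hrange]
      exact Submodule.subset_span ⟨C, hC, rfl⟩
    have h1 : (LinearEquiv.ofEq _ _ hrange)
        (⟨ind C, Submodule.subset_span ⟨C, hC, rfl⟩⟩ :
          Submodule.span ℝ sSet) = ⟨ind C, hmem⟩ := rfl
    have h2 : (LinearMap.quotKerEquivRange Ψ).symm ⟨ind C, hmem⟩
        = Submodule.Quotient.mk (Finsupp.single (⟨C, hC⟩ : κ) 1) := by
      rw [LinearEquiv.symm_apply_eq]
      apply Subtype.ext
      rw [LinearMap.quotKerEquivRange_apply_mk]
      show ind C = Ψ (Finsupp.single (⟨C, hC⟩ : κ) 1)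
      rw [show Ψ (Finsupp.single (⟨C, hC⟩ : κ) 1) = ind C by
        simp [Ψ, Finsupp.linearCombination_single]]
    simp only [LinearMap.comp_apply, LinearEquiv.coe_toLinearMap, h1, h2,
      Submodule.liftQ_apply]
    show Φ (Finsupp.single (⟨C, hC⟩ : κ) 1) = T C
    simp [Φ, Finsupp.linearCombination_single]
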